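/- arXiv:1802.00459 — 2 statements merged into one kernel-verified Lean document; each statement's English description precedes it below -/
import Mathlib

section
/- For every i ∈ {1,…,L}, every p ∈ Q_i, and every finite nonempty Z ⊆ ℝ^d, the parent cell C = c_{i−1}(p) satisfies C ∩ Q^I ≠ ∅ and dist(p,Z)² ≤ 2·d·g_{i−1}² + (2/|C ∩ Q^I|)·Σ_{q∈C∩Q^I} dist(q,Z)². -/
open scoped BigOperators Classical
open MeasureTheory

noncomputable section

/-- Points of `ℝ^d` with the Euclidean distance. -/
abbrev Pt (d : ℕ) := EuclideanSpace ℝ (Fin d)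

/-- Side length `g_i = Δ / 2^i` of the grid `G_i`. -/
def gside (Δ : ℕ) (i : ℤ) : ℝ := (Δ : ℝ) / (2 : ℝ) ^ i

/-- The half-open axis-parallel cube of side length `g` with corner `v + n·g`
(a cell of the shifted grid). -/
def cell (d : ℕ) (v : Pt d) (g : ℝ) (n : Fin d → ℤ) : Set (Pt d) :=
  {x | ∀ α : Fin d, v α + (n α : ℝ) * g ≤ x α ∧ x α < v α + ((n α : ℝ) + 1) * g}

/-- Index of the cell of side length `g` containing the point `p`. -/
def idx (d : ℕ) (v : Pt d) (g : ℝ) (p : Pt d) : Fin d → ℤ :=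
  fun α => ⌊(p α - v α) / g⌋

/-- `|C ∩ Q|`, the number of points of `Q` in the given cell. -/
def cellCount (d : ℕ) (Q : Finset (Pt d)) (v : Pt d) (g : ℝ) (n : Fin d → ℤ) : ℕ :=
  (Q.filter (fun p => p ∈ cell d v g n)).card

/-- The threshold `T_i(o) = (d/g_i)² · o / (100k)`. -/
def Tthr (d k Δ : ℕ) (o : ℝ) (i : ℤ) : ℝ :=
  ((d : ℝ) / gside Δ i) ^ 2 * o / (100 * (k : ℝ))

/-- A cell is heavy iff it is the cell of `G_{-1}` containing `Q`, or it is a nonempty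
cell of some `G_i`, `0 ≤ i ≤ L-1`, whose estimate `ẑ` is at least `T_i(o)`. -/
def Heavy (d k L Δ : ℕ) (Q : Finset (Pt d)) (v : Pt d) (o : ℝ)
    (zhat : ℤ → (Fin d → ℤ) → ℝ) (i : ℤ) (n : Fin d → ℤ) : Prop :=
  (i = -1 ∧ (Q : Set (Pt d)) ⊆ cell d v (gside Δ i) n) ∨
  (0 ≤ i ∧ i ≤ (L : ℤ) - 1 ∧ 0 < cellCount d Q v (gside Δ i) n ∧
    Tthr d k Δ o i ≤ zhat i n)

/-- A cell of `G_i` (`0 ≤ i ≤ L`) is crucial iff it is not heavy but all of its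
ancestors are heavy. -/
def Crucial (d k L Δ : ℕ) (Q : Finset (Pt d)) (v : Pt d) (o : ℝ)
    (zhat : ℤ → (Fin d → ℤ) → ℝ) (i : ℤ) (n : Fin d → ℤ) : Prop :=
  0 ≤ i ∧ i ≤ (L : ℤ) ∧ ¬ Heavy d k L Δ Q v o zhat i n ∧
  ∀ j : ℤ, -1 ≤ j → j < i → ∀ m : Fin d → ℤ,
    cell d v (gside Δ i) n ⊆ cell d v (gside Δ j) m →
      Heavy d k L Δ Q v o zhat j m

/-- `Q_i`, the set of points of `Q` lying in a crucial cell of `G_i`. -/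
def Qlevel (d k L Δ : ℕ) (Q : Finset (Pt d)) (v : Pt d) (o : ℝ)
    (zhat : ℤ → (Fin d → ℤ) → ℝ) (i : ℤ) : Finset (Pt d) :=
  Q.filter (fun p => Crucial d k L Δ Q v o zhat i (idx d v (gside Δ i) p))

/-- Accuracy guarantee of the estimation function `ẑ`: for every nonempty cell of
`G_i`, `0 ≤ i ≤ L-1`, either `|ẑ(C) - |C∩Q|| ≤ 0.1·T_i(o)` or
`0.99·|C∩Q| ≤ ẑ(C) ≤ 1.01·|C∩Q|`. -/
def ZhatAccurate (d k L Δ : ℕ) (Q : Finset (Pt d)) (v : Pt d) (o : ℝ)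
    (zhat : ℤ → (Fin d → ℤ) → ℝ) : Prop :=
  ∀ i : ℤ, 0 ≤ i → i ≤ (L : ℤ) - 1 → ∀ n : Fin d → ℤ,
    0 < cellCount d Q v (gside Δ i) n →
      (|zhat i n - (cellCount d Q v (gside Δ i) n : ℝ)| ≤ 0.1 * Tthr d k Δ o i ∨
        (0.99 * (cellCount d Q v (gside Δ i) n : ℝ) ≤ zhat i n ∧
          zhat i n ≤ 1.01 * (cellCount d Q v (gside Δ i) n : ℝ)))

/-- `γ = ε / (1600·L·d³)`. -/
def gammaPar (d L : ℕ) (ε : ℝ) : ℝ := ε / (1600 * (L : ℝ) * (d : ℝ) ^ 3)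

/-- Accuracy guarantee of the estimates `q̂_i` of `|Q_i|`. -/
def QhatAccurate (d k L Δ : ℕ) (Q : Finset (Pt d)) (v : Pt d) (o ε : ℝ)
    (zhat : ℤ → (Fin d → ℤ) → ℝ) (qhat : ℕ → ℝ) : Prop :=
  ∀ i : ℕ, i ≤ L →
    0 ≤ qhat i ∧
    (|qhat i - ((Qlevel d k L Δ Q v o zhat i).card : ℝ)| ≤
        0.1 * ε * gammaPar d L ε * Tthr d k Δ o i ∨
      ((1 - 0.01 * ε) * ((Qlevel d k L Δ Q v o zhat i).card : ℝ) ≤ qhat i ∧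
        qhat i ≤ (1 + 0.01 * ε) * ((Qlevel d k L Δ Q v o zhat i).card : ℝ)))

/-- The set of levels `I = {i ∈ {0,…,L} : q̂_i ≥ γ·T_i(o)}`. -/
def levelI (d k L Δ : ℕ) (o ε : ℝ) (qhat : ℕ → ℝ) : Finset ℕ :=
  (Finset.range (L + 1)).filter
    (fun i => gammaPar d L ε * Tthr d k Δ o i ≤ qhat i)

/-- `Q^I = ∪_{i ∈ I} Q_i`. -/
def QI (d k L Δ : ℕ) (Q : Finset (Pt d)) (v : Pt d) (o ε : ℝ)
    (zhat : ℤ → (Fin d → ℤ) → ℝ) (qhat : ℕ → ℝ) : Finset (Pt d) :=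
  (levelI d k L Δ o ε qhat).biUnion (fun i => Qlevel d k L Δ Q v o zhat i)

/-- `dist(q, Z) = min_{z ∈ Z} dist(q, z)`. -/
def nearDist (d : ℕ) (q : Pt d) (Z : Finset (Pt d)) : ℝ :=
  sInf ((dist q) '' (Z : Set (Pt d)))

/-- `cost(P, Z) = Σ_{q ∈ P} dist(q, Z)²`. -/
def cost (d : ℕ) (P Z : Finset (Pt d)) : ℝ :=
  ∑ q ∈ P, nearDist d q Z ^ 2

/-- `OPT`, the optimal `k`-means cost of `Q`. -/
def OPTcost (d k : ℕ) (Q : Finset (Pt d)) : ℝ :=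
  sInf {c : ℝ | ∃ Z : Finset (Pt d), Z.card = k ∧ c = cost d Q Z}

/-- Distance between two sets: `inf {dist x z : x ∈ C, z ∈ Z}`. -/
def setDist (d : ℕ) (C Z : Set (Pt d)) : ℝ := sInf (Set.image2 dist C Z)

/-- A cell `C ∈ G_i` is a center cell w.r.t. `Z*` if `dist(C, Z*) ≤ g_i/(2d)`. -/
def IsCenterCell (d Δ : ℕ) (v : Pt d) (Zstar : Finset (Pt d)) (i : ℤ)
    (n : Fin d → ℤ) : Prop :=
  setDist d (cell d v (gside Δ i) n) (Zstar : Set (Pt d)) ≤ gside Δ i / (2 * (d : ℝ))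

/-- The box `[0, Δ]^d` from which the random shift is drawn. -/
def shiftBox (d Δ : ℕ) : Set (Pt d) := {v | ∀ α : Fin d, v α ∈ Set.Icc (0 : ℝ) (Δ : ℝ)}


/-!
Suppose the parent cell `C = c_{i-1}(p)` of a point `p ∈ Q_i` missed `Q^I`. Take the finest level
`M ≥ i` with a point `q ∈ Q_M ∩ C`. Then `M ∉ I`, so `|Q_M| ≲ γ·T_M = 4γ·T_{M-1}`. The parent cell
`D` of `q` is heavy, so `|D ∩ Q| ≳ T_{M-1}`; but every point of `D ∩ Q` has the same (heavy)
ancestors as `q`, hence lies in some `Q_j` with `j ≥ M`, and since `D ⊆ C` maximality of `M` forces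
`j = M`. Thus `D ∩ Q ⊆ Q_M`, which is impossible as `γ` is tiny.

For the inequality, every `q ∈ C ∩ Q^I` satisfies `dist(p,Z)² ≤ 2·dist(p,q)² + 2·dist(q,Z)²` with
`dist(p,q)² ≤ d·g_{i-1}²`; apply this to a `q` whose `dist(q,Z)²` is at most the average.
-/

open Finset

theorem le_add_div_card_mul_sum {ι : Type*} {s : Finset ι} (hs : s.Nonempty) {a b c : ℝ}
    (hc : 0 ≤ c) {f : ι → ℝ} (h : ∀ i ∈ s, a ≤ b + c * f i) :
    a ≤ b + c / s.card * ∑ i ∈ s, f i := by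
  have hcard : (0 : ℝ) < s.card := by exact_mod_cast hs.card_pos
  obtain ⟨i, hi, hfi⟩ :=
    exists_le_of_sum_le hs (f := f) (g := fun _ => (∑ i ∈ s, f i) / s.card)
      (by rw [sum_const, nsmul_eq_mul, mul_div_cancel₀ _ hcard.ne'])
  calc a ≤ b + c * f i := h i hi
    _ ≤ b + c * ((∑ i ∈ s, f i) / s.card) := by gcongr
    _ = b + c / s.card * ∑ i ∈ s, f i := by ring

section Geometry

variable {d : ℕ}

theorem nearDist_eq_infDist {Z : Finset (Pt d)} (hZ : Z.Nonempty) (q : Pt d) :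
    nearDist d q Z = Metric.infDist q (Z : Set (Pt d)) :=
  (Metric.isGLB_infDist (coe_nonempty.2 hZ)).csInf_eq ((coe_nonempty.2 hZ).image _)

theorem nearDist_sq_le {Z : Finset (Pt d)} (hZ : Z.Nonempty) (p q : Pt d) :
    nearDist d p Z ^ 2 ≤ 2 * dist p q ^ 2 + 2 * nearDist d q Z ^ 2 := by
  rw [nearDist_eq_infDist hZ, nearDist_eq_infDist hZ]
  calc Metric.infDist p (Z : Set (Pt d)) ^ 2
      ≤ (dist p q + Metric.infDist q (Z : Set (Pt d))) ^ 2 := by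
        gcongr
        · exact Metric.infDist_nonneg
        · linarith [Metric.infDist_le_infDist_add_dist (x := p) (y := q) (s := (Z : Set (Pt d)))]
    _ ≤ 2 * dist p q ^ 2 + 2 * Metric.infDist q (Z : Set (Pt d)) ^ 2 := by
        linarith [add_sq_le (a := dist p q) (b := Metric.infDist q (Z : Set (Pt d)))]

variable {v : Pt d} {g : ℝ}

theorem mem_cell_iff_idx_eq (hg : 0 < g) {x : Pt d} {n : Fin d → ℤ} :
    x ∈ cell d v g n ↔ idx d v g x = n := by
  simp only [cell, Set.mem_ofPred_eq, funext_iff, idx, Int.floor_eq_iff, le_div_iff₀ hg,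
    div_lt_iff₀ hg]
  refine forall_congr' fun α => ?_
  constructor <;> rintro ⟨h₁, h₂⟩ <;> constructor <;> linarith

theorem mem_cell_idx (hg : 0 < g) (x : Pt d) : x ∈ cell d v g (idx d v g x) :=
  (mem_cell_iff_idx_eq hg).2 rfl

theorem dist_sq_le_of_mem_cell {x y : Pt d} {n : Fin d → ℤ} (hx : x ∈ cell d v g n)
    (hy : y ∈ cell d v g n) : dist x y ^ 2 ≤ d * g ^ 2 := by
  rw [EuclideanSpace.dist_eq, Real.sq_sqrt (sum_nonneg fun α _ => sq_nonneg _)]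
  calc ∑ α, dist (x α) (y α) ^ 2 ≤ ∑ _α : Fin d, g ^ 2 := by
        refine sum_le_sum fun α _ => ?_
        obtain ⟨hx₁, hx₂⟩ := hx α
        obtain ⟨hy₁, hy₂⟩ := hy α
        rw [Real.dist_eq, sq_abs]
        nlinarith
    _ = d * g ^ 2 := by simp

theorem idx_natCast_mul (n : ℕ) (x : Pt d) :
    idx d v (n * g) x = fun α => idx d v g x α / n := by
  funext α
  rw [idx, idx, ← Int.floor_div_natCast, div_div, mul_comm g]

end Geometry

theorem gside_pos {Δ : ℕ} (hΔ : 0 < Δ) (i : ℤ) : 0 < gside Δ i := by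
  unfold gside
  positivity

theorem gside_sub_natCast (Δ : ℕ) (i : ℤ) (n : ℕ) :
    gside Δ (i - n) = (2 ^ n : ℕ) * gside Δ i := by
  unfold gside
  rw [zpow_sub₀ two_ne_zero, zpow_natCast]
  field_simp
  push_cast
  ring

theorem idx_gside_eq_of_le {d Δ : ℕ} {v : Pt d} {i j : ℤ} (hji : j ≤ i) {x y : Pt d}
    (h : idx d v (gside Δ i) x = idx d v (gside Δ i) y) :
    idx d v (gside Δ j) x = idx d v (gside Δ j) y := by
  obtain ⟨n, rfl⟩ : ∃ n : ℕ, j = i - n := ⟨(i - j).toNat, by omega⟩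
  rw [gside_sub_natCast, idx_natCast_mul, idx_natCast_mul, h]

theorem Tthr_eq_four_mul (d k Δ : ℕ) (o : ℝ) (i : ℤ) :
    Tthr d k Δ o i = 4 * Tthr d k Δ o (i - 1) := by
  have h := gside_sub_natCast Δ i 1
  push_cast at h
  rw [Tthr, Tthr, h]
  ring

theorem gammaPar_le {d L : ℕ} {ε : ℝ} (hε : 0 ≤ ε) : gammaPar d L ε ≤ ε / 1600 := by
  unfold gammaPar
  rcases Nat.eq_zero_or_pos (L * d ^ 3) with h | h
  · have h' : (L : ℝ) * d ^ 3 = 0 := by exact_mod_cast h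
    rw [mul_assoc, h', mul_zero, div_zero]
    positivity
  · have h' : (1 : ℝ) ≤ L * d ^ 3 := by exact_mod_cast h
    exact div_le_div_of_nonneg_left hε (by norm_num) (by nlinarith)

section Marking

variable {d k L Δ : ℕ} {Q : Finset (Pt d)} {v : Pt d} {o ε : ℝ}
  {zhat : ℤ → (Fin d → ℤ) → ℝ} {qhat : ℕ → ℝ}

theorem not_heavy_of_le {j : ℤ} (hj : (L : ℤ) ≤ j) (n : Fin d → ℤ) :
    ¬ Heavy d k L Δ Q v o zhat j n := by
  rintro (⟨rfl, -⟩ | ⟨-, hjL, -⟩) <;> omega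

theorem mem_Qlevel_iff (hΔ : 0 < Δ) {i : ℤ} {r : Pt d} :
    r ∈ Qlevel d k L Δ Q v o zhat i ↔ r ∈ Q ∧ 0 ≤ i ∧ i ≤ L ∧
      ¬ Heavy d k L Δ Q v o zhat i (idx d v (gside Δ i) r) ∧
      ∀ j : ℤ, -1 ≤ j → j < i → Heavy d k L Δ Q v o zhat j (idx d v (gside Δ j) r) := by
  rw [Qlevel, mem_filter, Crucial]
  refine and_congr_right fun _ => and_congr_right fun _ => and_congr_right fun _ =>
    and_congr_right fun _ => forall₂_congr fun j _ => forall_congr' fun hji =>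
      ⟨fun h => ?_, ?_⟩
  · refine h _ fun x hx => (mem_cell_iff_idx_eq (gside_pos hΔ j)).2 ?_
    exact idx_gside_eq_of_le hji.le ((mem_cell_iff_idx_eq (gside_pos hΔ i)).1 hx)
  · intro h m hsub
    rwa [← (mem_cell_iff_idx_eq (gside_pos hΔ j)).1 (hsub (mem_cell_idx (gside_pos hΔ i) r))]

theorem exists_mem_Qlevel_of_heavy (hΔ : 0 < Δ) {r : Pt d} (hr : r ∈ Q) {t : ℕ}
    (ht : t ≤ L)
    (hanc : ∀ j : ℤ, -1 ≤ j → j < t →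
      Heavy d k L Δ Q v o zhat j (idx d v (gside Δ j) r)) :
    ∃ j : ℕ, t ≤ j ∧ j ≤ L ∧ r ∈ Qlevel d k L Δ Q v o zhat j := by
  by_cases hH : Heavy d k L Δ Q v o zhat t (idx d v (gside Δ t) r)
  · have htL : t < L := by
      by_contra! h
      exact not_heavy_of_le (by exact_mod_cast h) _ hH
    obtain ⟨j, htj, hjL, hrj⟩ := exists_mem_Qlevel_of_heavy hΔ hr htL fun j hj hjt => by
      rcases (show j < t ∨ j = t by push_cast at hjt; omega) with hjt | rfl
      exacts [hanc j hj hjt, hH]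
    exact ⟨j, by omega, hjL, hrj⟩
  · refine ⟨t, le_rfl, ht, (mem_Qlevel_iff hΔ).2 ⟨hr, by positivity, ?_, hH, hanc⟩⟩
    exact_mod_cast ht
termination_by L - t

theorem exists_mem_Qlevel_of_idx_eq (hΔ : 0 < Δ) {M : ℕ} {q r : Pt d}
    (hq : q ∈ Qlevel d k L Δ Q v o zhat M) (hr : r ∈ Q)
    (hrq : idx d v (gside Δ (M - 1)) r = idx d v (gside Δ (M - 1)) q) :
    ∃ j : ℕ, M ≤ j ∧ j ≤ L ∧ r ∈ Qlevel d k L Δ Q v o zhat j := by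
  obtain ⟨-, -, hML, -, hanc⟩ := (mem_Qlevel_iff hΔ).1 hq
  refine exists_mem_Qlevel_of_heavy hΔ hr (by exact_mod_cast hML) fun j hj hjM => ?_
  rw [idx_gside_eq_of_le (by omega) hrq]
  exact hanc j hj hjM

theorem pos_and_le_cellCount_of_heavy (hz : ZhatAccurate d k L Δ Q v o zhat) {j : ℤ}
    (hj : 0 ≤ j) {n : Fin d → ℤ} (hH : Heavy d k L Δ Q v o zhat j n) :
    0 < cellCount d Q v (gside Δ j) n ∧
      0.9 * Tthr d k Δ o j ≤ cellCount d Q v (gside Δ j) n := by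
  rcases hH with ⟨rfl, -⟩ | ⟨-, hjL, hpos, hT⟩
  · omega
  refine ⟨hpos, ?_⟩
  have hpos' : (0 : ℝ) < cellCount d Q v (gside Δ j) n := by exact_mod_cast hpos
  rcases hz j hj hjL n hpos with hclose | ⟨-, hratio⟩
  · linarith [(abs_le.1 hclose).2]
  · rcases le_or_gt (Tthr d k Δ o j) 0 with hT0 | hT0 <;> linarith

theorem card_Qlevel_le_of_notMem_levelI (hq : QhatAccurate d k L Δ Q v o ε zhat qhat)
    (hε : ε < 1 / 2) {M : ℕ} (hM : M ≤ L) (hMI : M ∉ levelI d k L Δ o ε qhat) :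
    ((Qlevel d k L Δ Q v o zhat M).card : ℝ) ≤ 1.06 * (gammaPar d L ε * Tthr d k Δ o M) := by
  have hlt : qhat M < gammaPar d L ε * Tthr d k Δ o M := by
    simpa [levelI, Nat.lt_succ_iff, hM] using hMI
  obtain ⟨hq0, hclose | ⟨hratio, -⟩⟩ := hq M hM
  · nlinarith [(abs_le.1 hclose).1, mul_nonneg (sub_nonneg.2 hε.le) (hq0.trans hlt.le)]
  · nlinarith [(Qlevel d k L Δ Q v o zhat M).card.cast_nonneg (α := ℝ)]

theorem not_filter_mem_parent_subset_Qlevel (hΔ : 0 < Δ) (hz : ZhatAccurate d k L Δ Q v o zhat)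
    (hε0 : 0 < ε) (hε1 : ε < 1 / 2) (hq : QhatAccurate d k L Δ Q v o ε zhat qhat) {M : ℕ}
    (hM : 1 ≤ M) (hMI : M ∉ levelI d k L Δ o ε qhat) {q : Pt d}
    (hqM : q ∈ Qlevel d k L Δ Q v o zhat M) :
    ¬ Q.filter (· ∈ cell d v (gside Δ (M - 1)) (idx d v (gside Δ (M - 1)) q)) ⊆
      Qlevel d k L Δ Q v o zhat M := by
  intro hsub
  obtain ⟨-, -, hML, -, hanc⟩ := (mem_Qlevel_iff hΔ).1 hqM
  obtain ⟨hpos, hlow⟩ :=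
    pos_and_le_cellCount_of_heavy hz (by omega) (hanc (M - 1) (by omega) (by omega))
  have hpos' : (0 : ℝ) < cellCount d Q v (gside Δ (M - 1)) (idx d v (gside Δ (M - 1)) q) := by
    exact_mod_cast hpos
  have hcard : (cellCount d Q v (gside Δ (M - 1)) (idx d v (gside Δ (M - 1)) q) : ℝ) ≤
      (Qlevel d k L Δ Q v o zhat M).card := by
    exact_mod_cast card_le_card hsub
  have hup := card_Qlevel_le_of_notMem_levelI hq hε1 (by exact_mod_cast hML) hMI
  have hγ : gammaPar d L ε ≤ ε / 1600 := gammaPar_le hε0.le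
  have hγ0 : 0 ≤ gammaPar d L ε := by unfold gammaPar; positivity
  rw [Tthr_eq_four_mul] at hup
  nlinarith

theorem parent_cell_inter_QI_nonempty (hΔ : 0 < Δ) (hz : ZhatAccurate d k L Δ Q v o zhat)
    (hε0 : 0 < ε) (hε1 : ε < 1 / 2) (hq : QhatAccurate d k L Δ Q v o ε zhat qhat) {i : ℕ}
    (hi : 1 ≤ i) {p : Pt d} (hp : p ∈ Qlevel d k L Δ Q v o zhat i) :
    ((QI d k L Δ Q v o ε zhat qhat).filter
      (· ∈ cell d v (gside Δ (i - 1)) (idx d v (gside Δ (i - 1)) p))).Nonempty := by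
  set C := cell d v (gside Δ (i - 1)) (idx d v (gside Δ (i - 1)) p)
  have hC : ∀ x, x ∈ C ↔ idx d v (gside Δ (i - 1)) x = idx d v (gside Δ (i - 1)) p :=
    fun x => mem_cell_iff_idx_eq (gside_pos hΔ _)
  by_contra hempty
  set S := (range (L + 1)).filter fun j =>
    i ≤ j ∧ ∃ q ∈ Qlevel d k L Δ Q v o zhat j, q ∈ C
  have hiS : i ∈ S := by
    obtain ⟨-, -, hiL, -⟩ := (mem_Qlevel_iff hΔ).1 hp
    exact mem_filter.2 ⟨mem_range.2 (by omega), le_rfl, p, hp, (hC p).2 rfl⟩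
  set M := S.max' ⟨i, hiS⟩
  obtain ⟨-, hiM, q, hqM, hqC⟩ := mem_filter.1 (S.max'_mem ⟨i, hiS⟩)
  have hMI : M ∉ levelI d k L Δ o ε qhat := fun hMI =>
    hempty ⟨q, mem_filter.2 ⟨mem_biUnion.2 ⟨M, hMI, hqM⟩, hqC⟩⟩
  refine not_filter_mem_parent_subset_Qlevel hΔ hz hε0 hε1 hq (by omega) hMI hqM fun r hr => ?_
  obtain ⟨hrQ, hrq⟩ := mem_filter.1 hr
  rw [mem_cell_iff_idx_eq (gside_pos hΔ _)] at hrq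
  obtain ⟨j, hMj, hjL, hrj⟩ := exists_mem_Qlevel_of_idx_eq hΔ hqM hrQ hrq
  have hrC : r ∈ C := (hC r).2 <| (idx_gside_eq_of_le (by omega) hrq).trans ((hC q).1 hqC)
  have hjM : j ≤ M :=
    S.le_max' j (mem_filter.2 ⟨mem_range.2 (by omega), by omega, r, hrj, hrC⟩)
  rwa [le_antisymm hjM hMj] at hrj

end Marking

theorem parent_cell_averaging_general
    (d k L Δ : ℕ) (hΔ : Δ = 2 ^ L)
    (v : Pt d) (Q : Finset (Pt d))
    (o : ℝ)
    (zhat : ℤ → (Fin d → ℤ) → ℝ)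
    (hz : ZhatAccurate d k L Δ Q v o zhat)
    (ε : ℝ) (hε0 : 0 < ε) (hε1 : ε < 1 / 2)
    (qhat : ℕ → ℝ)
    (hq : QhatAccurate d k L Δ Q v o ε zhat qhat) :
    ∀ i : ℕ, 1 ≤ i → i ≤ L → ∀ p ∈ Qlevel d k L Δ Q v o zhat i,
      ∀ Z : Finset (Pt d), Z.Nonempty →
        ((QI d k L Δ Q v o ε zhat qhat).filter
            (fun q => q ∈ cell d v (gside Δ ((i : ℤ) - 1))
              (idx d v (gside Δ ((i : ℤ) - 1)) p))).Nonempty ∧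
        nearDist d p Z ^ 2 ≤
          2 * (d : ℝ) * gside Δ ((i : ℤ) - 1) ^ 2 +
            (2 / (cellCount d (QI d k L Δ Q v o ε zhat qhat) v
                (gside Δ ((i : ℤ) - 1)) (idx d v (gside Δ ((i : ℤ) - 1)) p) : ℝ)) *
              ∑ q ∈ (QI d k L Δ Q v o ε zhat qhat).filter
                  (fun q => q ∈ cell d v (gside Δ ((i : ℤ) - 1))
                    (idx d v (gside Δ ((i : ℤ) - 1)) p)),
                nearDist d q Z ^ 2 := by
  intro i hi _ p hp Z hZ
  have hΔ0 : 0 < Δ := hΔ ▸ Nat.two_pow_pos L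
  have hg : 0 < gside Δ (i - 1) := gside_pos hΔ0 _
  have hne := parent_cell_inter_QI_nonempty hΔ0 hz hε0 hε1 hq hi hp
  refine ⟨hne, le_add_div_card_mul_sum hne zero_le_two fun q hq => ?_⟩
  have hpq := dist_sq_le_of_mem_cell (mem_cell_idx hg p) (mem_filter.1 hq).2
  calc nearDist d p Z ^ 2 ≤ 2 * dist p q ^ 2 + 2 * nearDist d q Z ^ 2 := nearDist_sq_le hZ p q
    _ ≤ 2 * d * gside Δ (i - 1) ^ 2 + 2 * nearDist d q Z ^ 2 := by linarith

/-- for every `i ∈ {1,…,L}`, every `p ∈ Q_i`, and every finite nonempty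
`Z`, the parent cell `C = c_{i−1}(p)` satisfies `C ∩ Q^I ≠ ∅` and
`dist(p,Z)² ≤ 2·d·g_{i−1}² + (2/|C ∩ Q^I|)·Σ_{q∈C∩Q^I} dist(q,Z)²`. -/
theorem parent_cell_averaging
    (d k L Δ : ℕ) (hd : 1 ≤ d) (hk : 1 ≤ k) (hL : 1 ≤ L) (hΔ : Δ = 2 ^ L)
    (v : Pt d) (Q : Finset (Pt d))
    (hQ : ∀ p ∈ Q, ∀ α : Fin d, ∃ m : ℤ, 1 ≤ m ∧ m ≤ (Δ : ℤ) ∧ p α = (m : ℝ))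
    (o : ℝ) (ho : 0 < o)
    (zhat : ℤ → (Fin d → ℤ) → ℝ)
    (hz : ZhatAccurate d k L Δ Q v o zhat)
    (ε : ℝ) (hε0 : 0 < ε) (hε1 : ε < 1 / 2)
    (qhat : ℕ → ℝ)
    (hq : QhatAccurate d k L Δ Q v o ε zhat qhat) :
    ∀ i : ℕ, 1 ≤ i → i ≤ L → ∀ p ∈ Qlevel d k L Δ Q v o zhat i,
      ∀ Z : Finset (Pt d), Z.Nonempty →
        ((QI d k L Δ Q v o ε zhat qhat).filter
            (fun q => q ∈ cell d v (gside Δ ((i : ℤ) - 1))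
              (idx d v (gside Δ ((i : ℤ) - 1)) p))).Nonempty ∧
        nearDist d p Z ^ 2 ≤
          2 * (d : ℝ) * gside Δ ((i : ℤ) - 1) ^ 2 +
            (2 / (cellCount d (QI d k L Δ Q v o ε zhat qhat) v
                (gside Δ ((i : ℤ) - 1)) (idx d v (gside Δ ((i : ℤ) - 1)) p) : ℝ)) *
              ∑ q ∈ (QI d k L Δ Q v o ε zhat qhat).filter
                  (fun q => q ∈ cell d v (gside Δ ((i : ℤ) - 1))
                    (idx d v (gside Δ ((i : ℤ) - 1)) p)),
                nearDist d q Z ^ 2 :=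
  parent_cell_averaging_general d k L Δ hΔ v Q o zhat hz ε hε0 hε1 qhat hq
end
end

section
/- Let Z* ⊆ ℝ^d be a finite nonempty set. For each i ∈ {0,…,L}, let (h_i(p))_{p∈Q} be λ-wise independent {0,1}-valued random variables with P[h_i(p) = 1] = min(4·10⁴·λ/T_i(o), 1), and let (h′_i(p))_{p∈Q} be λ-wise independent {0,1}-valued random variables with P[h′_i(p) = 1] = min(4·10⁴·ε⁻²·γ⁻¹·λ/T_i(o), 1). Then with probability at least 1 − δ/10, simultaneously for every i ∈ {0,…,L}: Σ over cells C ∈ G_i that are not center cells with respect to Z* of Σ_{p∈C∩Q} h_i(p) is at most 4·10³·λ + 1.01·(4·10⁴·λ/T_i(o))·Σ_{non-center cell C ∈ G_i} |C∩Q|, and Σ over cells C ∈ G_i that are not center cells with respect to Z* of Σ_{p∈C∩Q} h′_i(p) is at most 4·10³·ε⁻¹·λ + 1.01·(4·10⁴·ε⁻²·γ⁻¹·λ/T_i(o))·Σ_{non-center cell C ∈ G_i} |C∩Q|. -/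
open scoped BigOperators Classical
open MeasureTheory

noncomputable section

/-!
Fix a level `i` and let `S` be the points of `Q` lying in non-center cells of `G_i`; since the
cells of `G_i` are disjoint, both sums in the statement are sums over `S`. For `λ`-wise
independent Bernoulli(`q`) variables, `X = ∑_{p ∈ S} h(p)` has the same `λ`-th central moment as
in the fully independent case: expanding `(X - q|S|)^λ` over maps `f : Fin λ → S`, a term
vanishes unless every value of `f` is taken twice, and is at most `q^r` when `f` takes `r` values,
so `E[(X - μ)^λ] ≤ ∑_{r ≤ λ/2} q^r·C(|S|, r)·r^λ ≤ λ·(τ/10)^λ` for `τ = 4000λ + 0.01μ`.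
Markov's inequality for this even moment gives `P[X > μ + τ] ≤ λ·10^{-λ}`, and a union bound over
the `2(L + 1)` events is below `δ/10` because `2^λ ≥ 32/δ` and `2^λ ≥ max(L + 1, λ)`.
-/

open Finset Function ProbabilityTheory

section Bernoulli

variable {Ω ι : Type*} [MeasurableSpace Ω] {P : Measure Ω}

def bernoulliCentralMoment (q : ℝ) (m : ℕ) : ℝ := (1 - q) ^ m * q + (-q) ^ m * (1 - q)

lemma bernoulliCentralMoment_one (q : ℝ) : bernoulliCentralMoment q 1 = 0 := by
  rw [bernoulliCentralMoment]; ring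

lemma abs_bernoulliCentralMoment_le {q : ℝ} (hq0 : 0 ≤ q) (hq1 : q ≤ 1) {m : ℕ}
    (hm : 2 ≤ m) : |bernoulliCentralMoment q m| ≤ q := by
  have h1 : (1 - q) ^ m ≤ 1 - q := pow_le_of_le_one (by linarith) (by linarith) (by omega)
  have h2 : q ^ m ≤ q ^ 2 := pow_le_pow_of_le_one hq0 hq1 hm
  calc |bernoulliCentralMoment q m|
      ≤ |(1 - q) ^ m * q| + |(-q) ^ m * (1 - q)| := abs_add_le _ _
    _ = (1 - q) ^ m * q + q ^ m * (1 - q) := by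
      rw [abs_mul, abs_mul, abs_pow, abs_pow, abs_neg, abs_of_nonneg hq0,
        abs_of_nonneg (sub_nonneg.2 hq1)]
    _ ≤ (1 - q) * q + q ^ 2 * (1 - q) := by gcongr
    _ ≤ q := by nlinarith [mul_nonneg (mul_nonneg hq0 hq0) hq0]

structure IsBernoulliOn (S : Finset ι) (Y : ι → Ω → ℝ) (q : ℝ) (P : Measure Ω) : Prop where
  measurable : ∀ p ∈ S, Measurable (Y p)
  zero_or_one : ∀ p ∈ S, ∀ ω, Y p ω = 0 ∨ Y p ω = 1
  measure_eq_one : ∀ p ∈ S, P {ω | Y p ω = 1} = ENNReal.ofReal q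

def IsKWiseIndepOn (k : ℕ) (S : Finset ι) (Y : ι → Ω → ℝ) (P : Measure Ω) : Prop :=
  ∀ t ⊆ S, #t ≤ k → iIndepFun (fun p : t => Y p) P

variable {S T : Finset ι} {Y : ι → Ω → ℝ} {q : ℝ} {k : ℕ}

lemma IsBernoulliOn.mono (h : IsBernoulliOn T Y q P) (hST : S ⊆ T) : IsBernoulliOn S Y q P :=
  ⟨fun p hp => h.1 p (hST hp), fun p hp => h.2 p (hST hp), fun p hp => h.3 p (hST hp)⟩

lemma IsKWiseIndepOn.mono (h : IsKWiseIndepOn k T Y P) (hST : S ⊆ T) :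
    IsKWiseIndepOn k S Y P :=
  fun t ht => h t (ht.trans hST)

lemma abs_sub_le_one_of_zero_or_one {y : ℝ} (hy : y = 0 ∨ y = 1) (hq0 : 0 ≤ q)
    (hq1 : q ≤ 1) : |y - q| ≤ 1 := by
  rcases hy with rfl | rfl <;> rw [abs_le] <;> constructor <;> linarith

lemma integral_sub_pow_eq_bernoulliCentralMoment [IsProbabilityMeasure P] {X : Ω → ℝ}
    (hX : Measurable X) (h01 : ∀ ω, X ω = 0 ∨ X ω = 1) (hq0 : 0 ≤ q)
    (hq : P {ω | X ω = 1} = ENNReal.ofReal q) (m : ℕ) :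
    ∫ ω, (X ω - q) ^ m ∂P = bernoulliCentralMoment q m := by
  have hpt : ∀ ω, (X ω - q) ^ m =
      {ω | X ω = 1}.indicator (fun _ => (1 - q) ^ m - (-q) ^ m) ω + (-q) ^ m := by
    intro ω
    rcases h01 ω with h | h <;> simp [Set.indicator, h]
  have hmeas : MeasurableSet {ω | X ω = 1} := hX (measurableSet_singleton 1)
  simp_rw [hpt]
  rw [integral_add ((integrable_const _).indicator hmeas) (integrable_const _),
    integral_indicator_const _ hmeas, integral_const, measureReal_def, hq,
    ENNReal.toReal_ofReal hq0, bernoulliCentralMoment]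
  simp
  ring

lemma IsBernoulliOn.abs_sum_sub_le (hY : IsBernoulliOn S Y q P) (hq0 : 0 ≤ q) (hq1 : q ≤ 1)
    (ω : Ω) : |∑ p ∈ S, Y p ω - q * #S| ≤ #S := by
  rw [mul_comm, ← nsmul_eq_mul, ← sum_const, ← sum_sub_distrib]
  refine (abs_sum_le_sum_abs _ _).trans ?_
  simpa using sum_le_sum fun p hp =>
    abs_sub_le_one_of_zero_or_one (hY.zero_or_one p hp ω) hq0 hq1

end Bernoulli

section Combinatorics

variable {ι : Type*}

def TakesEachValueTwice {κ : Type*} [Fintype κ] (f : κ → ι) : Prop :=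
  ∀ b ∈ univ.image f, 2 ≤ #{j | f j = b}

lemma two_mul_card_image_le {κ : Type*} [Fintype κ] {f : κ → ι}
    (h : TakesEachValueTwice f) : 2 * #(univ.image f) ≤ Fintype.card κ := by
  calc 2 * #(univ.image f) = ∑ _b ∈ univ.image f, 2 := by rw [sum_const, smul_eq_mul, mul_comm]
    _ ≤ ∑ b ∈ univ.image f, #{j | f j = b} := sum_le_sum h
    _ = Fintype.card κ := (card_eq_sum_card_image f univ).symm

lemma card_filter_card_image_eq_le (S : Finset ι) (k r : ℕ) :
    #{f ∈ Fintype.piFinset (fun _ : Fin k => S) | #(univ.image f) = r} ≤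
      (#S).choose r * r ^ k := by
  have hsub : {f ∈ Fintype.piFinset (fun _ : Fin k => S) | #(univ.image f) = r} ⊆
      (S.powersetCard r).biUnion (fun t => Fintype.piFinset (fun _ : Fin k => t)) := by
    intro f hf
    rw [mem_filter, Fintype.mem_piFinset] at hf
    refine mem_biUnion.2 ⟨univ.image f, mem_powersetCard.2 ⟨?_, hf.2⟩, ?_⟩
    · simpa [image_subset_iff] using hf.1
    · exact Fintype.mem_piFinset.2 fun j => mem_image_of_mem f (mem_univ j)
  calc _ ≤ _ := card_le_card hsub
    _ ≤ ∑ t ∈ S.powersetCard r, #(Fintype.piFinset (fun _ : Fin k => t)) := card_biUnion_le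
    _ = ∑ t ∈ S.powersetCard r, r ^ k := by
      refine sum_congr rfl fun t ht => ?_
      rw [Fintype.card_piFinset, prod_const, card_univ, Fintype.card_fin,
        (mem_powersetCard.1 ht).2]
    _ = (#S).choose r * r ^ k := by rw [sum_const, smul_eq_mul, card_powersetCard]

lemma sum_pow_card_image_le (S : Finset ι) {k : ℕ} (hk : 0 < k) {q : ℝ} (hq0 : 0 ≤ q) :
    ∑ f ∈ Fintype.piFinset (fun _ : Fin k => S) with TakesEachValueTwice f,
        q ^ #(univ.image f) ≤
      ∑ r ∈ Icc 1 (k / 2), q ^ r * ((#S).choose r : ℝ) * (r : ℝ) ^ k := by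
  set V := {f ∈ Fintype.piFinset (fun _ : Fin k => S) | TakesEachValueTwice f}
  have hrank : ∀ f ∈ V, #(univ.image f) ∈ Icc 1 (k / 2) := by
    intro f hf
    simp only [V, mem_filter] at hf
    have h2 := two_mul_card_image_le hf.2
    rw [Fintype.card_fin] at h2
    have h1 : 0 < #(univ.image f) := card_pos.2 (univ_nonempty_iff.2 ⟨⟨0, hk⟩⟩ |>.image f)
    exact mem_Icc.2 ⟨h1, by omega⟩
  rw [← sum_fiberwise_of_maps_to hrank]
  refine sum_le_sum fun r _ => ?_
  calc ∑ f ∈ V with #(univ.image f) = r, q ^ #(univ.image f)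
      = #{f ∈ V | #(univ.image f) = r} * q ^ r := by
        rw [sum_congr rfl fun f hf => by rw [(mem_filter.1 hf).2], sum_const, nsmul_eq_mul]
    _ ≤ ((#S).choose r * r ^ k : ℕ) * q ^ r := by
        gcongr
        refine le_trans (card_le_card fun f hf => ?_) (card_filter_card_image_eq_le S k r)
        simp only [V, mem_filter] at hf ⊢
        exact ⟨hf.1.1, hf.2⟩
    _ = q ^ r * ((#S).choose r : ℝ) * (r : ℝ) ^ k := by push_cast; ring

end Combinatorics

section Moments

variable {Ω ι : Type*} [MeasurableSpace Ω] {P : Measure Ω} [IsProbabilityMeasure P]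
  {S : Finset ι} {Y : ι → Ω → ℝ} {q : ℝ} {k : ℕ}

/-- The product only involves the at most `k` variables `Y b`, `b ∈ image f`, which are
therefore independent. -/
lemma IsBernoulliOn.integral_prod_sub_eq (hY : IsBernoulliOn S Y q P)
    (hind : IsKWiseIndepOn k S Y P) (hq0 : 0 ≤ q) {f : Fin k → ι} (hf : ∀ j, f j ∈ S) :
    ∫ ω, ∏ j, (Y (f j) ω - q) ∂P =
      ∏ b ∈ univ.image f, bernoulliCentralMoment q #{j | f j = b} := by
  set t := univ.image f
  have htS : t ⊆ S := by simpa [t, image_subset_iff] using hf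
  have hpt : ∀ ω, ∏ j, (Y (f j) ω - q) = ∏ b : t, (Y b ω - q) ^ #{j | f j = b} :=
    fun ω => by rw [prod_comp (fun b => Y b ω - q) f, ← prod_coe_sort]
  simp_rw [hpt]
  rw [(hind t htS (card_image_le.trans (by simp))).integral_fun_prod_comp
      (f := fun (b : t) y => (y - q) ^ #{j | f j = b.1})
      (fun b => (hY.measurable b (htS b.2)).aemeasurable)
      (fun b => ((measurable_id.sub_const q).pow_const _).aestronglyMeasurable),
    ← prod_coe_sort t]
  exact prod_congr rfl fun b _ => integral_sub_pow_eq_bernoulliCentralMoment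
    (hY.measurable b (htS b.2)) (hY.zero_or_one b (htS b.2)) hq0
    (hY.measure_eq_one b (htS b.2)) _

lemma IsBernoulliOn.integral_prod_sub_le (hY : IsBernoulliOn S Y q P)
    (hind : IsKWiseIndepOn k S Y P) (hq0 : 0 ≤ q) (hq1 : q ≤ 1) {f : Fin k → ι}
    (hf : ∀ j, f j ∈ S) (hfib : TakesEachValueTwice f) :
    ∫ ω, ∏ j, (Y (f j) ω - q) ∂P ≤ q ^ #(univ.image f) := by
  rw [hY.integral_prod_sub_eq hind hq0 hf, ← prod_const]
  exact (le_abs_self _).trans <| (abs_prod _ _).trans_le <|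
    prod_le_prod (fun _ _ => abs_nonneg _) fun b hb =>
      abs_bernoulliCentralMoment_le hq0 hq1 (hfib b hb)

-- A value taken only once contributes the factor `E[Y b - q] = 0`.
lemma IsBernoulliOn.integral_prod_sub_eq_zero (hY : IsBernoulliOn S Y q P)
    (hind : IsKWiseIndepOn k S Y P) (hq0 : 0 ≤ q) {f : Fin k → ι}
    (hf : ∀ j, f j ∈ S) (hfib : ¬ TakesEachValueTwice f) :
    ∫ ω, ∏ j, (Y (f j) ω - q) ∂P = 0 := by
  simp only [TakesEachValueTwice, not_forall, not_le] at hfib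
  obtain ⟨b, hb, hlt⟩ := hfib
  obtain ⟨j, -, rfl⟩ := mem_image.1 hb
  have hone : #{j' | f j' = f j} = 1 := by
    have : 0 < #{j' | f j' = f j} := card_pos.2 ⟨j, by simp⟩
    omega
  rw [hY.integral_prod_sub_eq hind hq0 hf]
  exact prod_eq_zero hb (by rw [hone, bernoulliCentralMoment_one])

lemma sum_sub_pow_eq_sum_piFinset (S : Finset ι) (y : ι → ℝ) (q : ℝ) (k : ℕ) :
    (∑ p ∈ S, y p - q * #S) ^ k =
      ∑ f ∈ Fintype.piFinset (fun _ : Fin k => S), ∏ j, (y (f j) - q) := by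
  rw [mul_comm, ← nsmul_eq_mul, ← sum_const, ← sum_sub_distrib, ← Fin.prod_const,
    prod_univ_sum]

lemma IsBernoulliOn.integral_sum_sub_pow_le (hY : IsBernoulliOn S Y q P)
    (hind : IsKWiseIndepOn k S Y P) (hq0 : 0 ≤ q) (hq1 : q ≤ 1) (hk : 0 < k) :
    ∫ ω, (∑ p ∈ S, Y p ω - q * #S) ^ k ∂P ≤
      ∑ r ∈ Icc 1 (k / 2), q ^ r * ((#S).choose r : ℝ) * (r : ℝ) ^ k := by
  have hint : ∀ f ∈ Fintype.piFinset (fun _ : Fin k => S),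
      Integrable (fun ω => ∏ j, (Y (f j) ω - q)) P := by
    intro f hf
    rw [Fintype.mem_piFinset] at hf
    refine .of_bound (Finset.aestronglyMeasurable_fun_prod _ fun j _ =>
      ((hY.measurable _ (hf j)).sub_const q).aestronglyMeasurable) 1 (.of_forall fun ω => ?_)
    rw [Real.norm_eq_abs, abs_prod]
    exact prod_le_one (fun _ _ => abs_nonneg _) fun j _ =>
      abs_sub_le_one_of_zero_or_one (hY.zero_or_one _ (hf j) ω) hq0 hq1
  simp_rw [sum_sub_pow_eq_sum_piFinset S (Y · _) q k]
  rw [integral_finsetSum _ hint, ← sum_filter_of_ne fun f hf hne => by_contra fun hfib => hne <|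
    hY.integral_prod_sub_eq_zero hind hq0 (Fintype.mem_piFinset.1 hf) hfib]
  refine (sum_le_sum fun f hf => ?_).trans (sum_pow_card_image_le S hk hq0)
  rw [mem_filter, Fintype.mem_piFinset] at hf
  exact hY.integral_prod_sub_le hind hq0 hq1 hf.1 hf.2

end Moments

section Tail

lemma pow_self_le_three_pow_mul_factorial (r : ℕ) : (r : ℝ) ^ r ≤ 3 ^ r * r.factorial := by
  have h := Real.pow_div_factorial_le_exp (r : ℝ) (Nat.cast_nonneg r) r
  rw [div_le_iff₀ (by positivity), ← Real.exp_one_pow] at h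
  exact h.trans (by gcongr; exact Real.exp_one_lt_three.le)

lemma pow_mul_pow_sub_le_of_mul_le_sq {a b c : ℝ} (ha : 0 ≤ a) (hb : 0 ≤ b)
    (hab : a * b ≤ c ^ 2) (hbc : b ≤ c) {r k : ℕ} (hrk : 2 * r ≤ k) :
    a ^ r * b ^ (k - r) ≤ c ^ k :=
  calc a ^ r * b ^ (k - r) = (a * b) ^ r * b ^ (k - 2 * r) := by
        rw [mul_pow, mul_assoc, ← pow_add]; congr 2; omega
    _ ≤ (c ^ 2) ^ r * c ^ (k - 2 * r) := by gcongr
    _ = c ^ k := by rw [← pow_mul, ← pow_add]; congr 1; omega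

lemma pow_mul_choose_mul_pow_le {q : ℝ} (hq0 : 0 ≤ q) (N : ℕ) {r k : ℕ}
    (hrk : 2 * r ≤ k) :
    q ^ r * (N.choose r : ℝ) * (r : ℝ) ^ k ≤
      (3 * (q * N)) ^ r * ((k : ℝ) / 2) ^ (k - r) := by
  have hrk' : (r : ℝ) ≤ k / 2 := by
    rw [le_div_iff₀ two_pos]; exact_mod_cast (by omega : r * 2 ≤ k)
  calc q ^ r * (N.choose r : ℝ) * (r : ℝ) ^ k
      = q ^ r * (N.choose r : ℝ) * (r : ℝ) ^ r * (r : ℝ) ^ (k - r) := by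
        rw [mul_assoc _ ((r : ℝ) ^ r), ← pow_add]; congr 2; omega
    _ ≤ q ^ r * ((N : ℝ) ^ r / r.factorial) * (3 ^ r * r.factorial) *
          ((k : ℝ) / 2) ^ (k - r) := by
        gcongr
        · exact Nat.choose_le_pow_div r N
        · exact pow_self_le_three_pow_mul_factorial r
    _ = (3 * (q * N)) ^ r * ((k : ℝ) / 2) ^ (k - r) := by
        field_simp
        ring

lemma pow_mul_choose_mul_pow_le_tenth {q : ℝ} (hq0 : 0 ≤ q) (N : ℕ) {r k : ℕ}
    (hrk : 2 * r ≤ k) :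
    q ^ r * (N.choose r : ℝ) * (r : ℝ) ^ k ≤ ((4000 * k + 0.01 * (q * N)) / 10) ^ k := by
  have hμ : 0 ≤ q * N := by positivity
  refine (pow_mul_choose_mul_pow_le hq0 N hrk).trans
    (pow_mul_pow_sub_le_of_mul_le_sq (by positivity) (by positivity) ?_ ?_ hrk)
  · -- AM-GM: `3μ · k/2 ≤ 4 · 400k · 0.001μ ≤ (400k + 0.001μ)²`
    nlinarith [sq_nonneg (400 * (k : ℝ) - 0.001 * (q * N)), Nat.cast_nonneg (α := ℝ) k]
  · have : (0 : ℝ) ≤ k := Nat.cast_nonneg k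
    linarith

variable {Ω ι : Type*} [MeasurableSpace Ω] {P : Measure Ω} [IsProbabilityMeasure P]
  {S : Finset ι} {Y : ι → Ω → ℝ} {q : ℝ} {k : ℕ}

lemma IsBernoulliOn.measure_lt_sum_le (hY : IsBernoulliOn S Y q P)
    (hind : IsKWiseIndepOn k S Y P) (hq0 : 0 ≤ q) (hq1 : q ≤ 1) (hk : Even k) (hk0 : 0 < k) :
    P {ω | 4000 * k + 1.01 * (q * #S) < ∑ p ∈ S, Y p ω} ≤ ENNReal.ofReal (k / 10 ^ k) := by
  set τ : ℝ := 4000 * k + 0.01 * (q * #S) with hτ_def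
  have hτ : 0 < τ := by positivity
  set M : Ω → ℝ := fun ω => (∑ p ∈ S, Y p ω - q * #S) ^ k
  have hMmeas : Measurable M :=
    ((Finset.measurable_sum _ hY.measurable).sub_const _).pow_const k
  have hMint : Integrable M P := .of_bound hMmeas.aestronglyMeasurable ((#S : ℝ) ^ k)
    (.of_forall fun ω => by
      rw [Real.norm_eq_abs, abs_pow]
      exact pow_le_pow_left₀ (abs_nonneg _) (hY.abs_sum_sub_le hq0 hq1 ω) k)
  have hmoment : ∫ ω, M ω ∂P ≤ k * (τ / 10) ^ k :=
    calc ∫ ω, M ω ∂P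
        ≤ ∑ r ∈ Icc 1 (k / 2), q ^ r * ((#S).choose r : ℝ) * (r : ℝ) ^ k :=
          hY.integral_sum_sub_pow_le hind hq0 hq1 hk0
      _ ≤ ∑ _r ∈ Icc 1 (k / 2), (τ / 10) ^ k :=
          sum_le_sum fun r hr => pow_mul_choose_mul_pow_le_tenth hq0 _ (by
            have := (mem_Icc.1 hr).2; omega)
      _ ≤ k * (τ / 10) ^ k := by
          rw [sum_const, Nat.card_Icc, nsmul_eq_mul]
          gcongr
          exact_mod_cast (by omega : k / 2 + 1 - 1 ≤ k)
  have hsub : {ω | 4000 * k + 1.01 * (q * #S) < ∑ p ∈ S, Y p ω} ⊆ {ω | τ ^ k ≤ M ω} :=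
    fun ω hω => pow_le_pow_left₀ hτ.le (by rw [Set.mem_ofPred_eq] at hω; linarith) k
  have hmarkov := mul_meas_ge_le_integral_of_nonneg (.of_forall fun _ => hk.pow_nonneg _) hMint
    (τ ^ k)
  rw [ENNReal.le_ofReal_iff_toReal_le (measure_ne_top _ _) (by positivity), ← measureReal_def]
  refine (measureReal_mono hsub).trans (le_of_mul_le_mul_left ?_ (pow_pos hτ k))
  exact hmarkov.trans (hmoment.trans_eq (by rw [div_pow]; field_simp))

end Tail

section Cells

lemma hasSum_ite_mem_of_pairwise_disjoint {α β : Type*} {A : β → Set α}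
    (hA : Pairwise (Disjoint on A)) (C : β → Prop) (p : α) (a : ℝ) :
    HasSum (fun n : {n // C n} => if p ∈ A n then a else 0)
      (if ∃ n, C n ∧ p ∈ A n then a else 0) := by
  split_ifs with h
  · obtain ⟨n, hn, hp⟩ := h
    convert hasSum_single (⟨n, hn⟩ : {n // C n}) fun m hm => if_neg fun hpm =>
      hm (Subtype.ext (hA.eq (Set.not_disjoint_iff.2 ⟨p, hpm, hp⟩)))
    exact (if_pos hp).symm
  · convert hasSum_zero with m
    exact if_neg fun hp => h ⟨m, m.2, hp⟩

lemma tsum_sum_filter_mem_eq_sum_filter {α β : Type*} {A : β → Set α}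
    (hA : Pairwise (Disjoint on A)) (C : β → Prop) (Q : Finset α) (φ : α → ℝ) :
    ∑' n : {n // C n}, ∑ p ∈ Q with p ∈ A n, φ p =
      ∑ p ∈ Q with ∃ n, C n ∧ p ∈ A n, φ p := by
  simp_rw [sum_filter]
  exact (hasSum_sum fun p _ => hasSum_ite_mem_of_pairwise_disjoint hA C p (φ p)).tsum_eq

lemma idx_eq_of_mem_cell {d : ℕ} {v x : Pt d} {g : ℝ} {n : Fin d → ℤ}
    (hx : x ∈ cell d v g n) : idx d v g x = n := by
  funext α
  obtain ⟨h1, h2⟩ := hx α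
  have hg : 0 < g := by linarith
  rw [idx, Int.floor_eq_iff, le_div_iff₀ hg, div_lt_iff₀ hg]
  constructor <;> linarith

lemma pairwise_disjoint_cell (d : ℕ) (v : Pt d) (g : ℝ) : Pairwise (Disjoint on cell d v g) :=
  fun _ _ hnm => Set.disjoint_left.2 fun _ hn hm =>
    hnm ((idx_eq_of_mem_cell hn).symm.trans (idx_eq_of_mem_cell hm))

lemma tsum_sum_filter_mem_cell (d : ℕ) (v : Pt d) (g : ℝ) (C : (Fin d → ℤ) → Prop)
    (Q : Finset (Pt d)) (φ : Pt d → ℝ) :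
    ∑' n : {n // C n}, ∑ p ∈ Q with p ∈ cell d v g n, φ p =
      ∑ p ∈ Q with ∃ n, C n ∧ p ∈ cell d v g n, φ p :=
  tsum_sum_filter_mem_eq_sum_filter (pairwise_disjoint_cell d v g) C Q φ

lemma tsum_cellCount (d : ℕ) (v : Pt d) (g : ℝ) (C : (Fin d → ℤ) → Prop)
    (Q : Finset (Pt d)) :
    ∑' n : {n // C n}, (cellCount d Q v g n : ℝ) =
      #{p ∈ Q | ∃ n, C n ∧ p ∈ cell d v g n} := by
  simp_rw [cellCount, cast_card]
  exact tsum_sum_filter_mem_cell d v g C Q 1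

end Cells

section UnionBound

lemma div_le_two_pow_of_logb_add_le {δ : ℝ} (hδ0 : 0 < δ) {m : ℕ} {c : ℕ}
    (hm : Real.logb 2 (1 / δ) + c ≤ m) : 2 ^ c / δ ≤ (2 : ℝ) ^ m := by
  have h := Real.rpow_le_rpow_of_exponent_le one_le_two hm
  rwa [Real.rpow_add two_pos, Real.rpow_logb two_pos (by norm_num) (by positivity),
    Real.rpow_natCast, Real.rpow_natCast, one_div_mul_eq_div] at h

lemma add_one_mul_two_mul_div_ten_pow_le {d L lam : ℕ} (hd : 1 ≤ d) {δ : ℝ} (hδ0 : 0 < δ)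
    (hδ1 : δ ≤ 1)
    (hlam : 10 * ((d : ℝ) * L + Real.logb 2 (1 / δ) + 1) ≤ lam) :
    ((L : ℝ) + 1) * (2 * (lam / 10 ^ lam)) ≤ δ / 10 := by
  have hβ := Real.logb_nonneg one_lt_two (one_le_one_div hδ0 hδ1)
  have hLd : (L : ℝ) ≤ d * L := le_mul_of_one_le_left (Nat.cast_nonneg L) (by exact_mod_cast hd)
  have hL : (L + 1 : ℝ) ≤ 2 ^ lam := by
    have hLlam : L ≤ lam := by exact_mod_cast (show (L : ℝ) ≤ lam by nlinarith)
    exact_mod_cast Nat.lt_two_pow_self.trans_le (Nat.pow_le_pow_right two_pos hLlam)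
  have hlam2 : (lam : ℝ) ≤ 2 ^ lam := by exact_mod_cast Nat.lt_two_pow_self.le
  have h32 : 2 ^ 5 / δ ≤ (2 : ℝ) ^ lam :=
    div_le_two_pow_of_logb_add_le hδ0 <| by
      push_cast; nlinarith [Nat.cast_nonneg (α := ℝ) (d * L)]
  calc ((L : ℝ) + 1) * (2 * (lam / 10 ^ lam))
      ≤ 2 ^ lam * (2 * (2 ^ lam / 10 ^ lam)) := by gcongr
    _ = 2 * ((2 : ℝ) / 5) ^ lam := by rw [div_pow]; field_simp; rw [← mul_pow]; norm_num
    _ ≤ 2 * ((1 : ℝ) / 2) ^ lam := by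
      gcongr 2 * ?_; exact pow_le_pow_left₀ (by norm_num) (by norm_num) _
    _ = 2 / 2 ^ lam := by rw [div_pow, one_pow, mul_one_div]
    _ ≤ 2 / (2 ^ 5 / δ) := by gcongr
    _ ≤ δ / 10 := by rw [div_div_eq_mul_div]; linarith

variable {Ω : Type*} [MeasurableSpace Ω] {P : Measure Ω}

lemma measure_biUnion_union_le {ι : Type*} (s : Finset ι) {A B : ι → Set Ω} {x : ℝ}
    (hx : 0 ≤ x) (hA : ∀ i ∈ s, P (A i) ≤ ENNReal.ofReal x)
    (hB : ∀ i ∈ s, P (B i) ≤ ENNReal.ofReal x) :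
    P (⋃ i ∈ s, (A i ∪ B i)) ≤ ENNReal.ofReal (#s * (2 * x)) := by
  refine (measure_biUnion_finset_le s _).trans ?_
  calc ∑ i ∈ s, P (A i ∪ B i) ≤ ∑ _i ∈ s, ENNReal.ofReal (2 * x) :=
        sum_le_sum fun i hi => (measure_union_le _ _).trans <| by
          rw [two_mul, ENNReal.ofReal_add hx hx]; exact add_le_add (hA i hi) (hB i hi)
    _ = ENNReal.ofReal (#s * (2 * x)) := by
        rw [sum_const, nsmul_eq_mul, ENNReal.ofReal_mul (Nat.cast_nonneg _),
          ENNReal.ofReal_natCast]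

lemma ofReal_one_sub_le_of_measure_compl_le [IsProbabilityMeasure P] {s : Set Ω} {r : ℝ}
    (hr : 0 ≤ r) (h : P sᶜ ≤ ENNReal.ofReal r) : ENNReal.ofReal (1 - r) ≤ P s := by
  rw [ENNReal.ofReal_sub _ hr, ENNReal.ofReal_one, tsub_le_iff_right, ← measure_univ (μ := P)]
  exact (measure_univ_le_add_compl s).trans (add_le_add le_rfl h)

variable [IsProbabilityMeasure P] {ι : Type*} {Q S : Finset ι} {Y : ι → Ω → ℝ} {c : ℝ}
  {k : ℕ}

lemma IsBernoulliOn.measure_lt_sum_le_of_subset (hY : IsBernoulliOn Q Y (min c 1) P)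
    (hind : IsKWiseIndepOn k Q Y P) (hc : 0 ≤ c) (hk : Even k) (hk0 : 0 < k) (hSQ : S ⊆ Q)
    {a : ℝ} (ha : 4000 * k ≤ a) :
    P {ω | a + 1.01 * c * #S < ∑ p ∈ S, Y p ω} ≤ ENNReal.ofReal (k / 10 ^ k) := by
  refine (measure_mono fun ω hω => ?_).trans ((hY.mono hSQ).measure_lt_sum_le (hind.mono hSQ)
    (le_min hc zero_le_one) (min_le_right _ _) hk hk0)
  have : min c 1 * #S ≤ c * #S := by gcongr; exact min_le_left _ _
  simp only [Set.mem_ofPred_eq] at hω ⊢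
  linarith

end UnionBound

open ProbabilityTheory in
theorem noncenter_sample_bounds_general
    (d k L Δ : ℕ) (hd : 1 ≤ d)
    (v : Pt d) (Q : Finset (Pt d))
    (o : ℝ) (ho : 0 < o)
    (ε : ℝ) (hε0 : 0 < ε) (hε1 : ε < 1 / 2)
    (Zstar : Finset (Pt d))
    (δ : ℝ) (hδ0 : 0 < δ) (hδ1 : δ < 1 / 2)
    (lam : ℕ) (hlamEven : Even lam)
    (hlam : 10 * ((d : ℝ) * (L : ℝ) + Real.logb 2 (1 / δ) + 1) ≤ (lam : ℝ))
    {Ω : Type} [MeasurableSpace Ω] (P : Measure Ω) [IsProbabilityMeasure P]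
    (h h' : ℕ → Pt d → Ω → ℝ)
    (hmeas : ∀ i : ℕ, ∀ p : Pt d, Measurable (h i p))
    (hmeas' : ∀ i : ℕ, ∀ p : Pt d, Measurable (h' i p))
    (h01 : ∀ i : ℕ, i ≤ L → ∀ p ∈ Q, ∀ ω : Ω, h i p ω = 0 ∨ h i p ω = 1)
    (h01' : ∀ i : ℕ, i ≤ L → ∀ p ∈ Q, ∀ ω : Ω, h' i p ω = 0 ∨ h' i p ω = 1)
    (hprob : ∀ i : ℕ, i ≤ L → ∀ p ∈ Q,
      P {ω | h i p ω = 1} =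
        ENNReal.ofReal (min (4 * 10 ^ 4 * (lam : ℝ) / Tthr d k Δ o i) 1))
    (hprob' : ∀ i : ℕ, i ≤ L → ∀ p ∈ Q,
      P {ω | h' i p ω = 1} =
        ENNReal.ofReal (min
          (4 * 10 ^ 4 * ε⁻¹ ^ 2 * (gammaPar d L ε)⁻¹ * (lam : ℝ) / Tthr d k Δ o i) 1))
    (hindep : ∀ i : ℕ, i ≤ L → ∀ s : Finset (Pt d), s ⊆ Q → s.card ≤ lam →
      iIndepFun (m := fun _ : ↥s => (inferInstance : MeasurableSpace ℝ))
        (fun p : ↥s => h i ↑p) P)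
    (hindep' : ∀ i : ℕ, i ≤ L → ∀ s : Finset (Pt d), s ⊆ Q → s.card ≤ lam →
      iIndepFun (m := fun _ : ↥s => (inferInstance : MeasurableSpace ℝ))
        (fun p : ↥s => h' i ↑p) P) :
    ENNReal.ofReal (1 - δ / 10) ≤
      P {ω | ∀ i : ℕ, i ≤ L →
        ((∑' n : {n : Fin d → ℤ // ¬ IsCenterCell d Δ v Zstar i n},
            ∑ p ∈ Q.filter (fun p => p ∈ cell d v (gside Δ i) ↑n), h i p ω) ≤
          4 * 10 ^ 3 * (lam : ℝ) +
            1.01 * (4 * 10 ^ 4 * (lam : ℝ) / Tthr d k Δ o i) *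
              (∑' n : {n : Fin d → ℤ // ¬ IsCenterCell d Δ v Zstar i n},
                (cellCount d Q v (gside Δ i) ↑n : ℝ))) ∧
        ((∑' n : {n : Fin d → ℤ // ¬ IsCenterCell d Δ v Zstar i n},
            ∑ p ∈ Q.filter (fun p => p ∈ cell d v (gside Δ i) ↑n), h' i p ω) ≤
          4 * 10 ^ 3 * ε⁻¹ * (lam : ℝ) +
            1.01 * (4 * 10 ^ 4 * ε⁻¹ ^ 2 * (gammaPar d L ε)⁻¹ * (lam : ℝ) /
                Tthr d k Δ o i) *
              (∑' n : {n : Fin d → ℤ // ¬ IsCenterCell d Δ v Zstar i n},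
                (cellCount d Q v (gside Δ i) ↑n : ℝ)))} := by
  have hlam0 : 0 < lam := by
    have := Real.logb_nonneg one_lt_two (one_le_one_div hδ0 (by linarith))
    exact_mod_cast (show (0 : ℝ) < lam by nlinarith [Nat.cast_nonneg (α := ℝ) (d * L)])
  have hT : ∀ i : ℕ, 0 ≤ Tthr d k Δ o i := fun i => by unfold Tthr; positivity
  have hγ : 0 ≤ (gammaPar d L ε)⁻¹ := by unfold gammaPar; positivity
  have hεinv : 4000 * (lam : ℝ) ≤ 4 * 10 ^ 3 * ε⁻¹ * lam := by
    have : 1 ≤ ε⁻¹ := (one_le_inv₀ hε0).2 (by linarith)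
    nlinarith [Nat.cast_nonneg (α := ℝ) lam]
  set S : ℕ → Finset (Pt d) := fun i =>
    {p ∈ Q | ∃ n, ¬ IsCenterCell d Δ v Zstar i n ∧ p ∈ cell d v (gside Δ i) n}
  set A : ℕ → Set Ω := fun i => {ω | 4 * 10 ^ 3 * (lam : ℝ) +
    1.01 * (4 * 10 ^ 4 * (lam : ℝ) / Tthr d k Δ o i) * #(S i) < ∑ p ∈ S i, h i p ω}
  set B : ℕ → Set Ω := fun i => {ω | 4 * 10 ^ 3 * ε⁻¹ * (lam : ℝ) +
    1.01 * (4 * 10 ^ 4 * ε⁻¹ ^ 2 * (gammaPar d L ε)⁻¹ * (lam : ℝ) / Tthr d k Δ o i) * #(S i) <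
      ∑ p ∈ S i, h' i p ω}
  have hA : ∀ i ∈ range (L + 1), P (A i) ≤ ENNReal.ofReal (lam / 10 ^ lam) := fun i hi => by
    rw [mem_range_succ_iff] at hi
    exact IsBernoulliOn.measure_lt_sum_le_of_subset ⟨fun p _ => hmeas i p, h01 i hi, hprob i hi⟩
      (hindep i hi) (div_nonneg (by positivity) (hT i)) hlamEven hlam0 (filter_subset _ _)
      (by norm_num)
  have hB : ∀ i ∈ range (L + 1), P (B i) ≤ ENNReal.ofReal (lam / 10 ^ lam) := fun i hi => by
    rw [mem_range_succ_iff] at hi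
    exact IsBernoulliOn.measure_lt_sum_le_of_subset ⟨fun p _ => hmeas' i p, h01' i hi, hprob' i hi⟩
      (hindep' i hi) (div_nonneg (by positivity) (hT i)) hlamEven hlam0 (filter_subset _ _) hεinv
  refine ofReal_one_sub_le_of_measure_compl_le (by positivity) <|
    (measure_mono (t := ⋃ i ∈ range (L + 1), (A i ∪ B i)) fun ω hω => ?_).trans <|
    (measure_biUnion_union_le _ (by positivity) hA hB).trans ?_
  · simp only [Set.mem_compl_iff, Set.mem_ofPred_eq, not_forall, not_and_or, not_le,
      tsum_sum_filter_mem_cell, tsum_cellCount] at hω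
    obtain ⟨i, hi, hbad⟩ := hω
    exact Set.mem_biUnion (mem_range_succ_iff.2 hi) hbad
  · rw [card_range, Nat.cast_add_one]
    exact ENNReal.ofReal_le_ofReal (add_one_mul_two_mul_div_ten_pow_le hd hδ0 (by linarith) hlam)

open ProbabilityTheory in
/-- with probability at least `1 − δ/10`, simultaneously for every level
`i ∈ {0,…,L}`, the numbers of sampled points (under `h_i` and under `h′_i`) lying in
non-center cells of `G_i` are bounded by `4·10³·λ + 1.01·(4·10⁴·λ/T_i(o))·Σ|C∩Q|`
and `4·10³·ε⁻¹·λ + 1.01·(4·10⁴·ε⁻²·γ⁻¹·λ/T_i(o))·Σ|C∩Q|` respectively, the sums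
ranging over the non-center cells `C ∈ G_i`. -/
theorem noncenter_sample_bounds
    (d k L Δ : ℕ) (hd : 1 ≤ d) (hk : 1 ≤ k) (hL : 1 ≤ L) (hΔ : Δ = 2 ^ L)
    (v : Pt d) (Q : Finset (Pt d))
    (hQ : ∀ p ∈ Q, ∀ α : Fin d, ∃ m : ℤ, 1 ≤ m ∧ m ≤ (Δ : ℤ) ∧ p α = (m : ℝ))
    (o : ℝ) (ho : 0 < o)
    (ε : ℝ) (hε0 : 0 < ε) (hε1 : ε < 1 / 2)
    (Zstar : Finset (Pt d))
    (δ : ℝ) (hδ0 : 0 < δ) (hδ1 : δ < 1 / 2)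
    (lam : ℕ) (hlamEven : Even lam) (hlamPos : 0 < lam)
    (hlam : 10 * ((d : ℝ) * (L : ℝ) + Real.logb 2 (1 / δ) + 1) ≤ (lam : ℝ))
    {Ω : Type} [MeasurableSpace Ω] (P : Measure Ω) [IsProbabilityMeasure P]
    (h h' : ℕ → Pt d → Ω → ℝ)
    (hmeas : ∀ i : ℕ, ∀ p : Pt d, Measurable (h i p))
    (hmeas' : ∀ i : ℕ, ∀ p : Pt d, Measurable (h' i p))
    (h01 : ∀ i : ℕ, i ≤ L → ∀ p ∈ Q, ∀ ω : Ω, h i p ω = 0 ∨ h i p ω = 1)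
    (h01' : ∀ i : ℕ, i ≤ L → ∀ p ∈ Q, ∀ ω : Ω, h' i p ω = 0 ∨ h' i p ω = 1)
    (hprob : ∀ i : ℕ, i ≤ L → ∀ p ∈ Q,
      P {ω | h i p ω = 1} =
        ENNReal.ofReal (min (4 * 10 ^ 4 * (lam : ℝ) / Tthr d k Δ o i) 1))
    (hprob' : ∀ i : ℕ, i ≤ L → ∀ p ∈ Q,
      P {ω | h' i p ω = 1} =
        ENNReal.ofReal (min
          (4 * 10 ^ 4 * ε⁻¹ ^ 2 * (gammaPar d L ε)⁻¹ * (lam : ℝ) / Tthr d k Δ o i) 1))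
    (hindep : ∀ i : ℕ, i ≤ L → ∀ s : Finset (Pt d), s ⊆ Q → s.card ≤ lam →
      iIndepFun (m := fun _ : ↥s => (inferInstance : MeasurableSpace ℝ))
        (fun p : ↥s => h i ↑p) P)
    (hindep' : ∀ i : ℕ, i ≤ L → ∀ s : Finset (Pt d), s ⊆ Q → s.card ≤ lam →
      iIndepFun (m := fun _ : ↥s => (inferInstance : MeasurableSpace ℝ))
        (fun p : ↥s => h' i ↑p) P) :
    ENNReal.ofReal (1 - δ / 10) ≤
      P {ω | ∀ i : ℕ, i ≤ L →
        ((∑' n : {n : Fin d → ℤ // ¬ IsCenterCell d Δ v Zstar i n},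
            ∑ p ∈ Q.filter (fun p => p ∈ cell d v (gside Δ i) ↑n), h i p ω) ≤
          4 * 10 ^ 3 * (lam : ℝ) +
            1.01 * (4 * 10 ^ 4 * (lam : ℝ) / Tthr d k Δ o i) *
              (∑' n : {n : Fin d → ℤ // ¬ IsCenterCell d Δ v Zstar i n},
                (cellCount d Q v (gside Δ i) ↑n : ℝ))) ∧
        ((∑' n : {n : Fin d → ℤ // ¬ IsCenterCell d Δ v Zstar i n},
            ∑ p ∈ Q.filter (fun p => p ∈ cell d v (gside Δ i) ↑n), h' i p ω) ≤
          4 * 10 ^ 3 * ε⁻¹ * (lam : ℝ) +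
            1.01 * (4 * 10 ^ 4 * ε⁻¹ ^ 2 * (gammaPar d L ε)⁻¹ * (lam : ℝ) /
                Tthr d k Δ o i) *
              (∑' n : {n : Fin d → ℤ // ¬ IsCenterCell d Δ v Zstar i n},
                (cellCount d Q v (gside Δ i) ↑n : ℝ)))} :=
  noncenter_sample_bounds_general d k L Δ hd v Q o ho ε hε0 hε1 Zstar δ hδ0 hδ1 lam hlamEven hlam P
    h h' hmeas hmeas' h01 h01' hprob hprob' hindep hindep'

end
end
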